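/- arXiv:1911.05200 — 2 statements merged into one kernel-verified Lean document; each statement's English description precedes it below -/
import Mathlib

section
/- Let d ≥ 1, r > 0, a ∈ ℝ^d, and let F : (0,r) → ℝ be measurable with ∫_{B_r} |ξ| |F(|ξ|)| dξ < ∞. Then ∫_{B_r} (a·ξ) (ξ/|ξ|) F(|ξ|) dξ = (a/d) ∫_{B_r} |ξ| F(|ξ|) dξ, where B_r ⊂ ℝ^d is the open ball of radius r centred at the origin. -/
/-! With `G t = F t / t`, expanding `⟪a, ξ⟫ = ∑ j, a j * ξ j` reduces the claim to the second
moments `∫ ξ i * ξ j * G ‖ξ‖` over the ball. The ball and the radial weight are invariant under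
the reflection `ξ j ↦ -ξ j`, which kills the off-diagonal moments, and under transposition of
two coordinates, which makes the diagonal ones equal; their sum is
`∫ ‖ξ‖ ^ 2 * G ‖ξ‖ = ∫ ‖ξ‖ * F ‖ξ‖`. -/

open MeasureTheory Metric

theorem LinearIsometryEquiv.setIntegral_ball_comp {E F : Type*} [NormedAddCommGroup E]
    [InnerProductSpace ℝ E] [FiniteDimensional ℝ E] [MeasurableSpace E] [BorelSpace E]
    [NormedAddCommGroup F] [NormedSpace ℝ F]
    (L : E ≃ₗᵢ[ℝ] E) (f : E → F) (r : ℝ) :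
    ∫ x in ball 0 r, f (L x) = ∫ x in ball 0 r, f x := by
  have hball : L ⁻¹' ball 0 r = ball 0 r := by
    ext x
    simp
  simpa only [hball] using
    L.measurePreserving.setIntegral_preimage_emb L.toHomeomorph.measurableEmbedding f (ball 0 r)

variable {ι : Type*} [Fintype ι]

theorem integrable_apply_mul_apply_mul_radial {μ : Measure (EuclideanSpace ℝ ι)} {G : ℝ → ℝ}
    (hG : Integrable (fun ξ : EuclideanSpace ℝ ι => ‖ξ‖ ^ 2 * G ‖ξ‖) μ) (i j : ι) :
    Integrable (fun ξ : EuclideanSpace ℝ ι => ξ i * ξ j * G ‖ξ‖) μ := by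
  have hbound : ∀ ξ : EuclideanSpace ℝ ι, ‖ξ i * ξ j / ‖ξ‖ ^ 2‖ ≤ 1 := fun ξ => by
    rw [norm_div, norm_mul, norm_pow, norm_norm, sq]
    exact div_le_one_of_le₀ (mul_le_mul (PiLp.norm_apply_le ξ i) (PiLp.norm_apply_le ξ j)
      (norm_nonneg _) (norm_nonneg _)) (by positivity)
  refine (hG.bdd_mul (by fun_prop : Measurable _).aestronglyMeasurable (ae_of_all _ hbound)).congr
    (ae_of_all _ fun ξ => ?_)
  rcases eq_or_ne ξ 0 with rfl | hξ
  · simp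
  · field_simp [norm_ne_zero_iff.mpr hξ]

theorem integral_ball_apply_mul_apply_mul_radial_of_ne (G : ℝ → ℝ) (r : ℝ) {i j : ι}
    (hij : i ≠ j) :
    ∫ ξ in ball (0 : EuclideanSpace ℝ ι) r, ξ i * ξ j * G ‖ξ‖ = 0 := by
  classical
  let R : EuclideanSpace ℝ ι ≃ₗᵢ[ℝ] EuclideanSpace ℝ ι :=
    .piLpCongrRight 2 fun k => if k = j then .neg ℝ else .refl ℝ ℝ
  have hflip : ∀ ξ : EuclideanSpace ℝ ι,
      R ξ i * R ξ j * G ‖R ξ‖ = -(ξ i * ξ j * G ‖ξ‖) := fun ξ => by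
    rw [R.norm_map]
    simp [R, hij]
  have := R.setIntegral_ball_comp (fun ξ => ξ i * ξ j * G ‖ξ‖) r
  simp only [hflip, integral_neg] at this
  linarith

theorem integral_ball_apply_sq_mul_radial_eq (G : ℝ → ℝ) (r : ℝ) (i j : ι) :
    ∫ ξ in ball (0 : EuclideanSpace ℝ ι) r, ξ i ^ 2 * G ‖ξ‖ =
      ∫ ξ in ball (0 : EuclideanSpace ℝ ι) r, ξ j ^ 2 * G ‖ξ‖ := by
  classical
  simpa using ((LinearIsometryEquiv.piLpCongrLeft 2 ℝ ℝ (Equiv.swap i j)).setIntegral_ball_comp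
    (fun ξ => ξ i ^ 2 * G ‖ξ‖) r).symm

theorem card_mul_integral_ball_apply_sq_mul_radial {G : ℝ → ℝ} {r : ℝ}
    (hG : IntegrableOn (fun ξ : EuclideanSpace ℝ ι => ‖ξ‖ ^ 2 * G ‖ξ‖) (ball 0 r)) (i : ι) :
    Fintype.card ι * ∫ ξ in ball (0 : EuclideanSpace ℝ ι) r, ξ i ^ 2 * G ‖ξ‖ =
      ∫ ξ in ball (0 : EuclideanSpace ℝ ι) r, ‖ξ‖ ^ 2 * G ‖ξ‖ := by
  calc Fintype.card ι * ∫ ξ in ball (0 : EuclideanSpace ℝ ι) r, ξ i ^ 2 * G ‖ξ‖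
      = ∑ j, ∫ ξ in ball (0 : EuclideanSpace ℝ ι) r, ξ j ^ 2 * G ‖ξ‖ := by
        simp [integral_ball_apply_sq_mul_radial_eq G r _ i]
    _ = ∫ ξ in ball (0 : EuclideanSpace ℝ ι) r, ∑ j, ξ j ^ 2 * G ‖ξ‖ := by
        refine (integral_finsetSum _ fun j _ => ?_).symm
        simpa only [sq] using integrable_apply_mul_apply_mul_radial hG j j
    _ = ∫ ξ in ball (0 : EuclideanSpace ℝ ι) r, ‖ξ‖ ^ 2 * G ‖ξ‖ := by
        simp only [← Finset.sum_mul, EuclideanSpace.real_norm_sq_eq]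

theorem integral_ball_inner_mul_radial_smul {G : ℝ → ℝ} {r : ℝ}
    (hG : IntegrableOn (fun ξ : EuclideanSpace ℝ ι => ‖ξ‖ ^ 2 * G ‖ξ‖) (ball 0 r))
    (a : EuclideanSpace ℝ ι) :
    ∫ ξ in ball (0 : EuclideanSpace ℝ ι) r, (inner ℝ a ξ * G ‖ξ‖) • ξ =
      ((Fintype.card ι : ℝ)⁻¹ * ∫ ξ in ball (0 : EuclideanSpace ℝ ι) r, ‖ξ‖ ^ 2 * G ‖ξ‖) • a := by
  have hcoord : ∀ (ξ : EuclideanSpace ℝ ι) (k : ι),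
      ((inner ℝ a ξ * G ‖ξ‖) • ξ) k = ∑ j, a j * (ξ j * ξ k * G ‖ξ‖) := fun ξ k => by
    simp only [PiLp.smul_apply, smul_eq_mul, PiLp.inner_apply, RCLike.inner_apply,
      conj_trivial, Finset.sum_mul]
    exact Finset.sum_congr rfl fun j _ => by ring
  have hint : ∀ j k, IntegrableOn (fun ξ : EuclideanSpace ℝ ι => a j * (ξ j * ξ k * G ‖ξ‖))
      (ball 0 r) := fun j k => (integrable_apply_mul_apply_mul_radial hG j k).const_mul (a j)
  ext k
  rw [eval_integral_piLp fun k => by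
    simpa only [hcoord] using integrable_finsetSum _ fun j _ => hint j k]
  simp only [hcoord]
  rw [integral_finsetSum _ fun j _ => hint j k, Finset.sum_eq_single k]
  · simp only [integral_const_mul, ← sq, ← card_mul_integral_ball_apply_sq_mul_radial hG k]
    have : Nonempty ι := ⟨k⟩
    rw [inv_mul_cancel_left₀ (Nat.cast_ne_zero.2 Fintype.card_ne_zero)]
    simp [mul_comm]
  · intro j _ hjk
    rw [integral_const_mul, integral_ball_apply_mul_apply_mul_radial_of_ne G r hjk, mul_zero]
  · simp

theorem integral_ball_mixed_moment_general (d : ℕ) (r : ℝ)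
    (a : EuclideanSpace ℝ (Fin d))
    (F : ℝ → ℝ) (hFmeas : Measurable F)
    (hFint : IntegrableOn (fun ξ : EuclideanSpace ℝ (Fin d) => ‖ξ‖ * |F ‖ξ‖|)
      (ball (0 : EuclideanSpace ℝ (Fin d)) r)) :
    ∫ ξ in ball (0 : EuclideanSpace ℝ (Fin d)) r,
        ((inner ℝ a ξ : ℝ) * F ‖ξ‖ / ‖ξ‖) • ξ =
      ((d : ℝ)⁻¹ * ∫ ξ in ball (0 : EuclideanSpace ℝ (Fin d)) r, ‖ξ‖ * F ‖ξ‖) • a := by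
  have hradial : ∀ ξ : EuclideanSpace ℝ (Fin d), ‖ξ‖ ^ 2 * (F ‖ξ‖ / ‖ξ‖) = ‖ξ‖ * F ‖ξ‖ :=
    fun ξ => by
      rcases eq_or_ne ‖ξ‖ 0 with h | h
      · simp [h]
      · field_simp
  have hint : IntegrableOn (fun ξ : EuclideanSpace ℝ (Fin d) => ‖ξ‖ * F ‖ξ‖) (ball 0 r) :=
    hFint.mono' (by fun_prop : Measurable _).aestronglyMeasurable
      (ae_of_all _ fun ξ => by simp)
  simpa only [mul_div_assoc, hradial, Fintype.card_fin] using
    integral_ball_inner_mul_radial_smul (G := fun t => F t / t)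
      (by simpa only [hradial] using hint) a

theorem integral_ball_mixed_moment (d : ℕ) (hd : 1 ≤ d) (r : ℝ) (hr : 0 < r)
    (a : EuclideanSpace ℝ (Fin d))
    (F : ℝ → ℝ) (hFmeas : Measurable F)
    (hFint : IntegrableOn (fun ξ : EuclideanSpace ℝ (Fin d) => ‖ξ‖ * |F ‖ξ‖|)
      (ball (0 : EuclideanSpace ℝ (Fin d)) r)) :
    ∫ ξ in ball (0 : EuclideanSpace ℝ (Fin d)) r,
        ((inner ℝ a ξ : ℝ) * F ‖ξ‖ / ‖ξ‖) • ξ =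
      ((d : ℝ)⁻¹ * ∫ ξ in ball (0 : EuclideanSpace ℝ (Fin d)) r, ‖ξ‖ * F ‖ξ‖) • a :=
  integral_ball_mixed_moment_general d r a F hFmeas hFint
end

section
/- Let r ∈ (0,1), let F_r : (0,r) → [0,∞) be integrable, and let u : ℝ → ℝ be the indicator function of the interval (−1,1). Then ∫_{−1}^{1} |(A_r u)(x)| dx = (1/r²) ∫_0^r ρ F_r(ρ) dρ. In particular, if F_r satisfies the normalization ∫_0^r ρ F_r(ρ) dρ = r², then ∫_{−1}^{1} |(A_r u)(x)| dx = 1 for every r ∈ (0,1). -/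
/-!
For `0 < x < 1` and `0 < ξ < r ≤ 1` the point `x - ξ` stays inside `(-1, 1)`, so only the right
endpoint is felt: `A_r u(x) = -(2r²)⁻¹ ∫_{1-x}^r F`. Since `u` is even, `A_r u` is odd, hence
`∫_{-1}^1 |A_r u| = 2 ∫_0^1 |A_r u| = r⁻² ∫_0^r ∫_s^r F(ρ) dρ ds`, and Fubini on the triangle
`0 < s < ρ < r` turns the double integral into `∫_0^r ρ F(ρ) dρ`.
-/

open MeasureTheory

/-- The one-dimensional adhesion operator
`(A_r u)(x) = (1/(2r²)) ∫_{−r}^{r} u(x+ξ) sign(ξ) F_r(|ξ|) dξ`. -/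
noncomputable def adhesion1D (r : ℝ) (Fr : ℝ → ℝ) (u : ℝ → ℝ) (x : ℝ) : ℝ :=
  (2 * r ^ 2)⁻¹ * ∫ ξ in (-r)..r, u (x + ξ) * Real.sign ξ * Fr |ξ|

open Set
open scoped Interval

noncomputable def tailIntegral (F : ℝ → ℝ) (b s : ℝ) : ℝ := ∫ ξ in Ioo s b, F ξ

section tailIntegral

variable {F : ℝ → ℝ} {a b : ℝ}

theorem tailIntegral_of_le {s : ℝ} (h : b ≤ s) : tailIntegral F b s = 0 := by
  simp [tailIntegral, Ioo_eq_empty (not_lt.2 h)]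

theorem tailIntegral_nonneg {s : ℝ} (hF : ∀ ξ ∈ Ioo s b, 0 ≤ F ξ) : 0 ≤ tailIntegral F b s :=
  setIntegral_nonneg measurableSet_Ioo hF

theorem antitoneOn_tailIntegral (hF : IntegrableOn F (Ioo a b))
    (hF₀ : ∀ ξ ∈ Ioo a b, 0 ≤ F ξ) : AntitoneOn (tailIntegral F b) (Ici a) := by
  intro s hs t _ hst
  refine setIntegral_mono_set (hF.mono_set (Ioo_subset_Ioo_left hs)) ?_
    (Ioo_subset_Ioo_left hst).eventuallyLE
  exact (ae_restrict_iff' measurableSet_Ioo).2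
    (.of_forall fun ξ hξ => hF₀ ξ ⟨hs.trans_lt hξ.1, hξ.2⟩)

theorem setIntegral_Ioc_indicator_Ici {s : ℝ} (hs : 0 < s) :
    ∫ ξ in Ioc 0 b, (Ici s).indicator F ξ = tailIntegral F b s := by
  rw [setIntegral_indicator measurableSet_Ici, tailIntegral, ← integral_Icc_eq_integral_Ioo]
  congr 2
  ext ξ
  simp only [mem_inter_iff, mem_Ioc, mem_Ici, mem_Icc]
  constructor
  · rintro ⟨⟨_, h⟩, h'⟩; exact ⟨h', h⟩
  · rintro ⟨h', h⟩; exact ⟨⟨hs.trans_le h', h⟩, h'⟩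

theorem setIntegral_tailIntegral (hF : IntegrableOn F (Ioo a b)) :
    ∫ s in Ioo a b, tailIntegral F b s = ∫ ξ in Ioo a b, (ξ - a) * F ξ := by
  set μ := volume.restrict (Ioo a b)
  have : IsFiniteMeasure μ := isFiniteMeasure_restrict.2 measure_Ioo_lt_top.ne
  set φ : ℝ × ℝ → ℝ := {p : ℝ × ℝ | p.1 < p.2}.indicator fun p => F p.2
  have hφ : Integrable φ (μ.prod μ) := by
    simpa only [one_mul] using ((integrable_const (1 : ℝ)).mul_prod hF).indicator
      (measurableSet_lt measurable_fst measurable_snd)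
  have hleft : ∀ s ∈ Ioo a b, tailIntegral F b s = ∫ ξ, φ (s, ξ) ∂μ := by
    intro s hs
    have hset : Ioo a b ∩ Ioi s = Ioo s b := by
      ext ξ; simp only [mem_inter_iff, mem_Ioo, mem_Ioi]
      exact ⟨fun h => ⟨h.2, h.1.2⟩, fun h => ⟨⟨hs.1.trans h.1, h.2⟩, h.1⟩⟩
    rw [tailIntegral, ← hset, ← setIntegral_indicator measurableSet_Ioi]
    rfl
  have hright : ∀ ξ ∈ Ioo a b, (ξ - a) * F ξ = ∫ s, φ (s, ξ) ∂μ := by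
    intro ξ hξ
    have hset : Ioo a b ∩ Iio ξ = Ioo a ξ := by
      ext s; simp only [mem_inter_iff, mem_Ioo, mem_Iio]
      exact ⟨fun h => ⟨h.1.1, h.2⟩, fun h => ⟨⟨h.1, h.2.trans hξ.2⟩, h.2⟩⟩
    have : ∫ s, φ (s, ξ) ∂μ = ∫ s in Ioo a b ∩ Iio ξ, F ξ := by
      rw [← setIntegral_indicator measurableSet_Iio]
      rfl
    rw [this, hset, setIntegral_const, Real.volume_real_Ioo_of_le hξ.1.le, smul_eq_mul]
  rw [setIntegral_congr_fun measurableSet_Ioo hleft, setIntegral_congr_fun measurableSet_Ioo hright]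
  exact integral_integral_swap hφ

theorem integral_tailIntegral_one_sub (hb : b ≤ 1) :
    ∫ x in 0..1, tailIntegral F b (1 - x) = ∫ s in Ioo 0 b, tailIntegral F b s := by
  rw [intervalIntegral.integral_comp_sub_left, sub_self, sub_zero,
    intervalIntegral.integral_of_le zero_le_one, integral_Ioc_eq_integral_Ioo]
  exact setIntegral_eq_of_subset_of_forall_sdiff_eq_zero measurableSet_Ioo
    (Ioo_subset_Ioo_right hb) fun s hs => tailIntegral_of_le (not_lt.1 fun h => hs.2 ⟨hs.1.1, h⟩)

end tailIntegral

theorem integral_mul_sign_mul_abs {g k : ℝ → ℝ} {r : ℝ} (hr : 0 ≤ r)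
    (hg : IntervalIntegrable (fun ξ => g ξ * k ξ) volume 0 r)
    (hg' : IntervalIntegrable (fun ξ => g (-ξ) * k ξ) volume 0 r) :
    ∫ ξ in -r..r, g ξ * Real.sign ξ * k |ξ| = ∫ ξ in 0..r, (g ξ - g (-ξ)) * k ξ := by
  have hpos : ∀ ξ ∈ Ι 0 r, g ξ * Real.sign ξ * k |ξ| = g ξ * k ξ := by
    intro ξ hξ
    rw [uIoc_of_le hr] at hξ
    rw [Real.sign_of_pos hξ.1, abs_of_pos hξ.1, mul_one]
  have hneg : ∀ ξ ∈ Ι 0 r, g (-ξ) * Real.sign (-ξ) * k |-ξ| = -(g (-ξ) * k ξ) := by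
    intro ξ hξ
    rw [uIoc_of_le hr] at hξ
    rw [Real.sign_of_neg (neg_neg_of_pos hξ.1), abs_neg, abs_of_pos hξ.1]
    ring
  have hIpos : IntervalIntegrable (fun ξ => g ξ * Real.sign ξ * k |ξ|) volume 0 r :=
    (intervalIntegrable_congr hpos).2 hg
  have hIneg : IntervalIntegrable (fun ξ => g ξ * Real.sign ξ * k |ξ|) volume (-r) 0 := by
    rw [IntervalIntegrable.iff_comp_neg, neg_neg, neg_zero]
    exact ((intervalIntegrable_congr hneg).2 hg'.neg).symm
  rw [← intervalIntegral.integral_add_adjacent_intervals hIneg hIpos,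
    ← neg_zero, ← intervalIntegral.integral_comp_neg, neg_zero,
    intervalIntegral.integral_congr_ae (.of_forall hneg),
    intervalIntegral.integral_congr_ae (.of_forall hpos), intervalIntegral.integral_neg,
    neg_add_eq_sub, ← intervalIntegral.integral_sub hg hg']
  simp only [sub_mul]

theorem adhesion1D_eq_integral_sub {r C x : ℝ} {F u : ℝ → ℝ} (hr : 0 ≤ r)
    (hF : IntervalIntegrable F volume 0 r) (hu : Measurable u) (hC : ∀ y, ‖u y‖ ≤ C) :
    adhesion1D r F u x = (2 * r ^ 2)⁻¹ * ∫ ξ in 0..r, (u (x + ξ) - u (x - ξ)) * F ξ := by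
  have hbdd (f : ℝ → ℝ) (hf : Measurable f) :
      IntervalIntegrable (fun ξ => u (f ξ) * F ξ) volume 0 r :=
    ⟨hF.1.bdd_mul (hu.comp hf).aestronglyMeasurable (.of_forall fun _ => hC _),
      hF.2.bdd_mul (hu.comp hf).aestronglyMeasurable (.of_forall fun _ => hC _)⟩
  simp only [adhesion1D, sub_eq_add_neg x]
  rw [integral_mul_sign_mul_abs (g := fun ξ => u (x + ξ)) hr (hbdd _ (by fun_prop))
    (hbdd _ (by fun_prop))]

theorem adhesion1D_neg {r x : ℝ} {F u : ℝ → ℝ} (hu : ∀ y, u (-y) = u y) :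
    adhesion1D r F u (-x) = -adhesion1D r F u x := by
  simp only [adhesion1D, ← mul_neg, ← intervalIntegral.integral_neg]
  rw [← neg_neg r, ← intervalIntegral.integral_comp_neg, neg_neg]
  congr 2 with ξ
  rw [← neg_add, hu, Real.sign_neg, abs_neg]
  ring

theorem adhesion1D_indicator_Ioo {r x : ℝ} {F : ℝ → ℝ} (hr : 0 ≤ r) (hr₁ : r ≤ 1)
    (hF : IntervalIntegrable F volume 0 r) (hx : x ∈ Ioo 0 1) :
    adhesion1D r F ((Ioo (-1) 1).indicator fun _ => 1) x =
      -((2 * r ^ 2)⁻¹ * tailIntegral F r (1 - x)) := by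
  rw [adhesion1D_eq_integral_sub hr hF (measurable_const.indicator measurableSet_Ioo)
    (C := 1) fun y => (norm_indicator_le_norm_self _ y).trans norm_one.le]
  have hdiff : ∀ ξ ∈ Ioc 0 r, ((Ioo (-1) 1).indicator (fun _ => (1 : ℝ)) (x + ξ) -
      (Ioo (-1) 1).indicator (fun _ => 1) (x - ξ)) * F ξ = -(Ici (1 - x)).indicator F ξ := by
    intro ξ hξ
    have hleft : x - ξ ∈ Ioo (-1) 1 := ⟨by linarith [hx.1, hξ.2], by linarith [hx.2, hξ.1]⟩
    by_cases hright : 1 - x ≤ ξ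
    · have : x + ξ ∉ Ioo (-1) 1 := fun h => by linarith [h.2]
      simp [this, hleft, hright]
    · have : x + ξ ∈ Ioo (-1) 1 := ⟨by linarith [hx.1, hξ.1], by linarith⟩
      simp [this, hleft, hright]
  rw [intervalIntegral.integral_of_le hr, setIntegral_congr_fun measurableSet_Ioc hdiff,
    integral_neg, setIntegral_Ioc_indicator_Ici (by linarith [hx.2]), mul_neg]

theorem abs_adhesion1D_indicator_Ioo {r x : ℝ} {F : ℝ → ℝ} (hr : 0 ≤ r) (hr₁ : r ≤ 1)
    (hF : IntervalIntegrable F volume 0 r) (hF₀ : ∀ ρ ∈ Ioo 0 r, 0 ≤ F ρ) (hx : x ∈ Ioo 0 1) :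
    |adhesion1D r F ((Ioo (-1) 1).indicator fun _ => 1) x| =
      (2 * r ^ 2)⁻¹ * tailIntegral F r (1 - x) := by
  rw [adhesion1D_indicator_Ioo hr hr₁ hF hx, abs_neg, abs_of_nonneg]
  exact mul_nonneg (by positivity)
    (tailIntegral_nonneg fun ξ hξ => hF₀ ξ ⟨by linarith [hx.2, hξ.1], hξ.2⟩)

theorem integral_of_even_eq_two_mul {f : ℝ → ℝ} {a : ℝ} (hf : ∀ x, f (-x) = f x)
    (hfi : IntervalIntegrable f volume 0 a) :
    ∫ x in -a..a, f x = 2 * ∫ x in 0..a, f x := by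
  have hfi' : IntervalIntegrable f volume (-a) 0 := by
    rw [IntervalIntegrable.iff_comp_neg, neg_neg, neg_zero]
    simpa only [hf] using hfi.symm
  rw [← intervalIntegral.integral_add_adjacent_intervals hfi' hfi, ← neg_zero,
    ← intervalIntegral.integral_comp_neg, neg_zero]
  simp only [hf]
  ring

theorem integral_abs_adhesion1D_indicator
    (r : ℝ) (hr : r ∈ Set.Ioo (0 : ℝ) 1)
    (Fr : ℝ → ℝ) (hFnonneg : ∀ ρ ∈ Set.Ioo (0 : ℝ) r, 0 ≤ Fr ρ)
    (hF : IntegrableOn Fr (Set.Ioo 0 r))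
    (u : ℝ → ℝ) (hu : u = Set.indicator (Set.Ioo (-1 : ℝ) 1) fun _ => (1 : ℝ)) :
    (∫ x in (-1 : ℝ)..1, |adhesion1D r Fr u x|) =
        (r ^ 2)⁻¹ * ∫ ρ in (0 : ℝ)..r, ρ * Fr ρ ∧
      ((∫ ρ in (0 : ℝ)..r, ρ * Fr ρ) = r ^ 2 →
        (∫ x in (-1 : ℝ)..1, |adhesion1D r Fr u x|) = 1) := by
  obtain ⟨hr₀, hr₁⟩ := hr
  suffices key : (∫ x in (-1 : ℝ)..1, |adhesion1D r Fr u x|) =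
      (r ^ 2)⁻¹ * ∫ ρ in (0 : ℝ)..r, ρ * Fr ρ from
    ⟨key, fun hnorm => by rw [key, hnorm, inv_mul_cancel₀ (by positivity)]⟩
  set c : ℝ := (2 * r ^ 2)⁻¹
  have habs : EqOn (fun x => |adhesion1D r Fr u x|) (fun x => c * tailIntegral Fr r (1 - x))
      (uIoo 0 1) := fun x hx => by
    rw [uIoo_of_le (zero_le_one' ℝ)] at hx
    exact hu ▸ abs_adhesion1D_indicator_Ioo hr₀.le hr₁.le
      ((intervalIntegrable_iff_integrableOn_Ioo_of_le hr₀.le).2 hF) hFnonneg hx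
  have htail : IntervalIntegrable (fun x => c * tailIntegral Fr r (1 - x)) volume 0 1 := by
    have : IntervalIntegrable (tailIntegral Fr r) volume 0 1 :=
      ((antitoneOn_tailIntegral hF hFnonneg).mono
        (uIcc_of_le (zero_le_one' ℝ) ▸ Icc_subset_Ici_self)).intervalIntegrable
    simpa using (this.comp_sub_left 1).symm.const_mul c
  have heven : ∀ x, |adhesion1D r Fr u (-x)| = |adhesion1D r Fr u x| := fun x => by
    rw [adhesion1D_neg fun y => by simp [hu, indicator_apply, neg_lt, and_comm], abs_neg]
  rw [integral_of_even_eq_two_mul heven (htail.congr_uIoo habs.symm),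
    intervalIntegral.integral_congr_uIoo habs, intervalIntegral.integral_const_mul,
    integral_tailIntegral_one_sub hr₁.le, setIntegral_tailIntegral hF,
    intervalIntegral.integral_of_le hr₀.le, integral_Ioc_eq_integral_Ioo]
  simp only [sub_zero, c]
  ring
end
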